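/- The singular value shrinkage operator solves the nuclear norm proximal problem for complex matrices: for τ > 0 and a complex m×n matrix Y with SVD Y = U Σ Vᴴ, the matrix D_τ(Y) = U diag(max(σ_i − τ, 0)) Vᴴ is a minimizer of (1/2)‖X − Y‖_F² + τ‖X‖_* over complex m×n matrices X. -/

import Mathlib

open Matrix
open scoped ComplexOrder

/-- Frobenius norm of a complex matrix. -/
noncomputable def frobNorm {m n : ℕ} (A : Matrix (Fin m) (Fin n) ℂ) : ℝ :=
  Real.sqrt (∑ i, ∑ j, ‖A i j‖ ^ 2)

/-- Nuclear norm of a complex matrix: the sum of its singular values, i.e. of the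
square roots of the eigenvalues of `Xᴴ * X`. -/
noncomputable def nuclearNorm {m n : ℕ} (X : Matrix (Fin m) (Fin n) ℂ) : ℝ :=
  ∑ i, Real.sqrt ((Matrix.posSemidef_conjTranspose_mul_self X).isHermitian.eigenvalues i)

/-!
Write `Y = D + τ G` with `D = U diag(max(σᵢ - τ, 0)) Vᴴ` and `G = U diag(min(σᵢ, τ) / τ) Vᴴ`.
Since `1 - Gᴴ G` is positive semidefinite, `Re tr(Xᴴ G) ≤ ‖X‖_*` for every `X` (Cauchy–Schwarz
on the columns of `X W` and `G W`, where `W` diagonalizes `Xᴴ X`), with equality at `X = D`.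
Hence `G` is a subgradient of the nuclear norm at `D`, and expanding
`‖X - Y‖_F² = ‖X - D‖_F² - 2τ Re tr((X - D)ᴴ G) + ‖D - Y‖_F²` shows that `D` is a minimizer.
-/

open Polynomial in
theorem Matrix.IsHermitian.sum_comp_eigenvalues_of_charpoly_eq {ι : Type*} [Fintype ι]
    [DecidableEq ι] {A : Matrix ι ι ℂ} (hA : A.IsHermitian) {μ : ι → ℝ}
    (h : A.charpoly = ∏ i, (X - C (μ i : ℂ))) (f : ℝ → ℝ) :
    ∑ i, f (hA.eigenvalues i) = ∑ i, f (μ i) := by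
  have hroots : Finset.univ.val.map hA.eigenvalues = Finset.univ.val.map μ := by
    apply Multiset.map_injective Complex.ofReal_injective
    have hμ := roots_multiset_prod_X_sub_C (Finset.univ.val.map (fun i => (μ i : ℂ)))
    rw [Multiset.map_map, ← Finset.prod_eq_multiset_prod] at hμ
    rw [Multiset.map_map, Multiset.map_map]
    exact hA.roots_charpoly_eq_eigenvalues.symm.trans (h ▸ hμ)
  have hsum := congrArg (fun s => (s.map f).sum) hroots
  simp only [Multiset.map_map] at hsum
  exact hsum

theorem Matrix.charpoly_mul_mul_conjTranspose {ι : Type*} [Fintype ι] [DecidableEq ι]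
    {V : Matrix ι ι ℂ} (hV : Vᴴ * V = 1) (M : Matrix ι ι ℂ) :
    (V * M * Vᴴ).charpoly = M.charpoly := by
  rw [charpoly_mul_comm, ← Matrix.mul_assoc, hV, Matrix.one_mul]

theorem nuclearNorm_eq_sum_sqrt_of_conjTranspose_mul_self_eq {m n : ℕ}
    {X : Matrix (Fin m) (Fin n) ℂ} {V : Matrix (Fin n) (Fin n) ℂ} (hV : Vᴴ * V = 1)
    {μ : Fin n → ℝ} (h : Xᴴ * X = V * diagonal (fun j => (μ j : ℂ)) * Vᴴ) :
    nuclearNorm X = ∑ j, √(μ j) :=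
  IsHermitian.sum_comp_eigenvalues_of_charpoly_eq _
    (by rw [h, charpoly_mul_mul_conjTranspose hV, charpoly_diagonal]) _

section Gram

variable {κ ι : Type*} [Fintype κ]

theorem Matrix.re_conjTranspose_mul_self_apply_self (A : Matrix κ ι ℂ) (j : ι) :
    ((Aᴴ * A) j j).re = ∑ k, ‖A k j‖ ^ 2 := by
  simp [mul_apply, Complex.conj_mul', ← Complex.ofReal_pow]

theorem Matrix.re_conjTranspose_mul_apply_self_le (A B : Matrix κ ι ℂ) (j : ι) :
    ((Aᴴ * B) j j).re ≤ √((Aᴴ * A) j j).re * √((Bᴴ * B) j j).re := by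
  have h := re_inner_le_norm (𝕜 := ℂ) (WithLp.toLp 2 fun k => A k j)
    (WithLp.toLp 2 fun k => B k j)
  rw [EuclideanSpace.inner_toLp_toLp, EuclideanSpace.norm_eq, EuclideanSpace.norm_eq] at h
  rw [re_conjTranspose_mul_self_apply_self, re_conjTranspose_mul_self_apply_self]
  convert h using 1
  simp [mul_apply, dotProduct, mul_comm]

theorem Matrix.PosSemidef.re_conjTranspose_mul_self_apply_self_le_one [DecidableEq ι]
    {G : Matrix κ ι ℂ} (hG : (1 - Gᴴ * G).PosSemidef) (j : ι) : ((Gᴴ * G) j j).re ≤ 1 := by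
  simpa using (Complex.nonneg_iff.1 (hG.diag_nonneg (i := j))).1

theorem Matrix.PosSemidef.one_sub_conjTranspose_mul_self_mul {ι' : Type*} [Fintype ι]
    [Fintype ι'] [DecidableEq ι] [DecidableEq ι'] {G : Matrix κ ι ℂ} (hG : (1 - Gᴴ * G).PosSemidef)
    {W : Matrix ι ι' ℂ} (hW : Wᴴ * W = 1) : (1 - (G * W)ᴴ * (G * W)).PosSemidef := by
  have := hG.conjTranspose_mul_mul_same W
  rw [Matrix.mul_sub, Matrix.sub_mul, Matrix.mul_one, hW] at this
  simpa only [conjTranspose_mul, Matrix.mul_assoc] using this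

end Gram

theorem Matrix.conjTranspose_mul_mul_conjTranspose_mul {κ ι : Type*} [Fintype κ] [Fintype ι]
    [DecidableEq κ] {U : Matrix κ κ ℂ} (hU : Uᴴ * U = 1) (A B : Matrix κ ι ℂ)
    (V : Matrix ι ι ℂ) :
    (U * A * Vᴴ)ᴴ * (U * B * Vᴴ) = V * (Aᴴ * B) * Vᴴ := by
  simp only [conjTranspose_mul, conjTranspose_conjTranspose, Matrix.mul_assoc]
  rw [← Matrix.mul_assoc Uᴴ, hU, Matrix.one_mul]

theorem frobNorm_sq {m n : ℕ} (A : Matrix (Fin m) (Fin n) ℂ) :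
    frobNorm A ^ 2 = (trace (Aᴴ * A)).re := by
  rw [frobNorm, Real.sq_sqrt (by positivity), trace, Complex.re_sum, Finset.sum_comm]
  simp only [diag_apply, re_conjTranspose_mul_self_apply_self]

theorem frobNorm_add_sq {m n : ℕ} (P Q : Matrix (Fin m) (Fin n) ℂ) :
    frobNorm (P + Q) ^ 2 = frobNorm P ^ 2 + 2 * (trace (Pᴴ * Q)).re + frobNorm Q ^ 2 := by
  have hQP : (trace (Qᴴ * P)).re = (trace (Pᴴ * Q)).re := by
    rw [← conjTranspose_conjTranspose P, ← conjTranspose_mul, trace_conjTranspose,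
      conjTranspose_conjTranspose, Complex.star_def, Complex.conj_re]
  simp only [frobNorm_sq, conjTranspose_add, Matrix.add_mul, Matrix.mul_add, trace_add,
    Complex.add_re, hQP]
  ring

theorem re_trace_conjTranspose_mul_le_nuclearNorm {m n : ℕ} (X G : Matrix (Fin m) (Fin n) ℂ)
    (hG : (1 - Gᴴ * G).PosSemidef) : (trace (Xᴴ * G)).re ≤ nuclearNorm X := by
  set hX := (posSemidef_conjTranspose_mul_self X).isHermitian
  set W : Matrix (Fin n) (Fin n) ℂ := ↑hX.eigenvectorUnitary
  have hW : Wᴴ * W = 1 := Unitary.coe_star_mul_self _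
  have hW' : W * Wᴴ = 1 := Unitary.coe_mul_star_self _
  have hXW : (X * W)ᴴ * (X * W) = diagonal fun j => (hX.eigenvalues j : ℂ) := by
    have := hX.conjStarAlgAut_star_eigenvectorUnitary
    rw [Unitary.conjStarAlgAut_apply] at this
    simpa [W, conjTranspose_mul, Matrix.mul_assoc, Function.comp_def, star_eq_conjTranspose]
      using this
  have htr : trace (Xᴴ * G) = trace ((X * W)ᴴ * (G * W)) := by
    rw [conjTranspose_mul, Matrix.mul_assoc, trace_mul_comm Wᴴ, Matrix.mul_assoc,
      Matrix.mul_assoc G, hW', Matrix.mul_one]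
  rw [htr, trace, Complex.re_sum, nuclearNorm]
  refine Finset.sum_le_sum fun j _ => ?_
  calc (((X * W)ᴴ * (G * W)).diag j).re
      ≤ √(((X * W)ᴴ * (X * W)) j j).re * √(((G * W)ᴴ * (G * W)) j j).re :=
        re_conjTranspose_mul_apply_self_le _ _ j
    _ ≤ √(hX.eigenvalues j) * 1 := by
        rw [hXW, diagonal_apply_eq, Complex.ofReal_re]
        gcongr
        exact Real.sqrt_le_one.mpr
          ((hG.one_sub_conjTranspose_mul_self_mul hW).re_conjTranspose_mul_self_apply_self_le_one j)
    _ = √(hX.eigenvalues j) := mul_one _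

def IsSubgradient {m n : ℕ} (f : Matrix (Fin m) (Fin n) ℂ → ℝ)
    (D G : Matrix (Fin m) (Fin n) ℂ) : Prop :=
  ∀ X, f D + (trace ((X - D)ᴴ * G)).re ≤ f X

theorem isSubgradient_nuclearNorm {m n : ℕ} {D G : Matrix (Fin m) (Fin n) ℂ}
    (hG : (1 - Gᴴ * G).PosSemidef) (hD : nuclearNorm D ≤ (trace (Dᴴ * G)).re) :
    IsSubgradient nuclearNorm D G := fun X => by
  have := re_trace_conjTranspose_mul_le_nuclearNorm X G hG
  rw [conjTranspose_sub, Matrix.sub_mul, trace_sub, Complex.sub_re]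
  linarith

theorem IsSubgradient.prox_le {m n : ℕ} {f : Matrix (Fin m) (Fin n) ℂ → ℝ}
    {D G Y : Matrix (Fin m) (Fin n) ℂ} (hG : IsSubgradient f D G) {τ : ℝ} (hτ : 0 ≤ τ)
    (hYD : Y - D = τ • G) (X : Matrix (Fin m) (Fin n) ℂ) :
    1 / 2 * frobNorm (D - Y) ^ 2 + τ * f D ≤ 1 / 2 * frobNorm (X - Y) ^ 2 + τ * f X := by
  have hXY : X - Y = (X - D) + -(τ • G) := by rw [← hYD]; abel
  have hDY : D - Y = -(τ • G) := by rw [← hYD, neg_sub]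
  have hcross : (trace ((X - D)ᴴ * -(τ • G))).re = -τ * (trace ((X - D)ᴴ * G)).re := by
    simp [Matrix.mul_smul, trace_smul]
  rw [hXY, hDY, frobNorm_add_sq, hcross]
  nlinarith [mul_le_mul_of_nonneg_left (hG X) hτ, sq_nonneg (frobNorm (X - D))]

noncomputable def rectDiag (m n : ℕ) (a : ℕ → ℝ) : Matrix (Fin m) (Fin n) ℂ :=
  of fun i j => if (i : ℕ) = j then (a i : ℂ) else 0

theorem conjTranspose_rectDiag_mul_rectDiag {m n : ℕ} (a b : ℕ → ℝ) :
    (rectDiag m n a)ᴴ * rectDiag m n b =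
      diagonal fun j : Fin n => ((if (j : ℕ) < m then a j * b j else 0 : ℝ) : ℂ) := by
  ext j k
  have hterm : ∀ i : Fin m, star (rectDiag m n a i j) * rectDiag m n b i k =
      if (i : ℕ) = j then (if j = k then ((a j * b j : ℝ) : ℂ) else 0) else 0 := by
    intro i
    by_cases hij : (i : ℕ) = j
    · by_cases hjk : j = k
      · simp [rectDiag, hij, hjk]
      · simp [rectDiag, hij, hjk, Fin.val_eq_val]
    · simp [rectDiag, hij]
  simp only [mul_apply, conjTranspose_apply, hterm, diagonal_apply]
  rw [Fin.sum_univ_eq_sum_range (fun i => if i = (j : ℕ) then _ else 0), Finset.sum_ite_eq']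
  by_cases hjk : j = k <;> simp [hjk, apply_ite Complex.ofReal]

theorem rectDiag_add {m n : ℕ} (a b : ℕ → ℝ) :
    rectDiag m n (a + b) = rectDiag m n a + rectDiag m n b := by
  ext i j
  simp only [rectDiag, of_apply, Matrix.add_apply, Pi.add_apply, Complex.ofReal_add]
  split_ifs <;> simp

theorem rectDiag_smul {m n : ℕ} (c : ℝ) (a : ℕ → ℝ) :
    rectDiag m n (c • a) = c • rectDiag m n a := by
  ext i j
  simp only [rectDiag, of_apply, Matrix.smul_apply, Pi.smul_apply]
  split_ifs <;> simp [Complex.real_smul]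

section SingularValueDecomposition

variable {m n : ℕ} {U : Matrix (Fin m) (Fin m) ℂ} {V : Matrix (Fin n) (Fin n) ℂ}

theorem nuclearNorm_mul_rectDiag_mul (hU : Uᴴ * U = 1) (hV : Vᴴ * V = 1) {a : ℕ → ℝ}
    (ha : ∀ k, 0 ≤ a k) :
    nuclearNorm (U * rectDiag m n a * Vᴴ) = ∑ j : Fin n, if (j : ℕ) < m then a j else 0 := by
  rw [nuclearNorm_eq_sum_sqrt_of_conjTranspose_mul_self_eq hV
    (by rw [conjTranspose_mul_mul_conjTranspose_mul hU, conjTranspose_rectDiag_mul_rectDiag])]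
  refine Finset.sum_congr rfl fun j _ => ?_
  split_ifs <;> simp [Real.sqrt_mul_self, ha]

theorem re_trace_conjTranspose_mul_rectDiag_mul (hU : Uᴴ * U = 1) (hV : Vᴴ * V = 1)
    (a b : ℕ → ℝ) :
    (trace ((U * rectDiag m n a * Vᴴ)ᴴ * (U * rectDiag m n b * Vᴴ))).re =
      ∑ j : Fin n, if (j : ℕ) < m then a j * b j else 0 := by
  rw [conjTranspose_mul_mul_conjTranspose_mul hU, trace_mul_comm, ← Matrix.mul_assoc, hV,
    Matrix.one_mul, conjTranspose_rectDiag_mul_rectDiag, trace_diagonal, Complex.re_sum]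
  simp only [Complex.ofReal_re]

theorem posSemidef_one_sub_conjTranspose_mul_self_rectDiag_mul (hU : Uᴴ * U = 1)
    (hV : V * Vᴴ = 1) {b : ℕ → ℝ} (hb : ∀ k, b k * b k ≤ 1) :
    (1 - (U * rectDiag m n b * Vᴴ)ᴴ * (U * rectDiag m n b * Vᴴ)).PosSemidef := by
  have hconj (M : Matrix (Fin n) (Fin n) ℂ) : 1 - V * M * Vᴴ = V * (1 - M) * Vᴴ := by
    rw [Matrix.mul_sub, Matrix.sub_mul, Matrix.mul_one, hV]
  rw [conjTranspose_mul_mul_conjTranspose_mul hU, conjTranspose_rectDiag_mul_rectDiag, hconj,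
    ← diagonal_one, diagonal_sub]
  refine PosSemidef.mul_mul_conjTranspose_same (posSemidef_diagonal_iff.2 fun j => ?_) V
  rw [sub_nonneg, ← Complex.ofReal_one, Complex.real_le_real]
  split_ifs
  · exact hb j
  · exact zero_le_one

end SingularValueDecomposition

theorem singular_value_shrinkage_solves_prox {m n : ℕ} (τ : ℝ) (hτ : 0 < τ)
    (Y : Matrix (Fin m) (Fin n) ℂ)
    (U : Matrix (Fin m) (Fin m) ℂ) (V : Matrix (Fin n) (Fin n) ℂ) (σ : ℕ → ℝ)
    (hU : Uᴴ * U = 1 ∧ U * Uᴴ = 1)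
    (hV : Vᴴ * V = 1 ∧ V * Vᴴ = 1)
    (hσ0 : ∀ k, 0 ≤ σ k)
    (hY : Y = U * Matrix.of (fun (i : Fin m) (j : Fin n) =>
      if (i : ℕ) = (j : ℕ) then (σ (i : ℕ) : ℂ) else 0) * Vᴴ) :
    ∀ X : Matrix (Fin m) (Fin n) ℂ,
      (1 / 2) * frobNorm ((U * Matrix.of (fun (i : Fin m) (j : Fin n) =>
          if (i : ℕ) = (j : ℕ) then ((max (σ (i : ℕ) - τ) 0 : ℝ) : ℂ) else 0) * Vᴴ) - Y) ^ 2 +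
        τ * nuclearNorm (U * Matrix.of (fun (i : Fin m) (j : Fin n) =>
          if (i : ℕ) = (j : ℕ) then ((max (σ (i : ℕ) - τ) 0 : ℝ) : ℂ) else 0) * Vᴴ) ≤
      (1 / 2) * frobNorm (X - Y) ^ 2 + τ * nuclearNorm X := by
  obtain ⟨hU, -⟩ := hU
  obtain ⟨hV, hV'⟩ := hV
  set d : ℕ → ℝ := fun k => max (σ k - τ) 0
  set g : ℕ → ℝ := fun k => min (σ k) τ / τ
  have hσ : σ = d + τ • g := by
    funext k
    rcases le_total (σ k) τ with h | h <;> simp [d, g, h, mul_div_cancel₀ _ hτ.ne', hτ.ne']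
  have hdg (k : ℕ) : d k * g k = d k := by
    rcases le_total (σ k) τ with h | h
    · simp [d, h]
    · simp [g, h, hτ.ne']
  have hg (k : ℕ) : g k * g k ≤ 1 := by
    have h0 : 0 ≤ g k := div_nonneg (le_min (hσ0 k) hτ.le) hτ.le
    have h1 : g k ≤ 1 := (div_le_one hτ).2 (min_le_right _ _)
    nlinarith
  have hYD : Y - U * rectDiag m n d * Vᴴ = τ • (U * rectDiag m n g * Vᴴ) := by
    change Y = U * rectDiag m n σ * Vᴴ at hY
    rw [hY, hσ, rectDiag_add, rectDiag_smul, Matrix.mul_add, Matrix.add_mul, add_sub_cancel_left,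
      Matrix.mul_smul, Matrix.smul_mul]
  have hsub : IsSubgradient nuclearNorm (U * rectDiag m n d * Vᴴ) (U * rectDiag m n g * Vᴴ) :=
    isSubgradient_nuclearNorm (posSemidef_one_sub_conjTranspose_mul_self_rectDiag_mul hU hV' hg)
      (by rw [nuclearNorm_mul_rectDiag_mul hU hV fun k => le_max_right _ _,
        re_trace_conjTranspose_mul_rectDiag_mul hU hV]; simp only [hdg]; exact le_rfl)
  exact hsub.prox_le hτ.le hYD
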